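/- arXiv:0809.1960 — 6 statements merged into one kernel-verified Lean document; each statement's English description precedes it below -/
import Mathlib

section
/- (Keller's theorem) If T ⊆ ℝⁿ determines a cube tiling of ℝⁿ, then for every pair of distinct elements s, t ∈ T there is an index j ∈ {1,…,n} such that |s_j − t_j| is a positive integer. -/
/-- The half-open unit cube `[0,1)ⁿ` translated by `t`. -/
def Cube {n : ℕ} (t : Fin n → ℝ) : Set (Fin n → ℝ) :=
  {x | ∀ j, t j ≤ x j ∧ x j < t j + 1}

/-- `T` determines a cube tiling of `ℝⁿ`: the cubes `[0,1)ⁿ + t`, `t ∈ T`,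
are pairwise disjoint and their union is all of `ℝⁿ`. -/
def IsCubeTiling {n : ℕ} (T : Set (Fin n → ℝ)) : Prop :=
  (∀ s ∈ T, ∀ t ∈ T, s ≠ t → Disjoint (Cube s) (Cube t)) ∧
  (⋃ t ∈ T, Cube t) = Set.univ

/-- `T ⊆ ℝ` determines a tiling of `ℝ` by unit intervals `[0,1) + t`. -/
def IsCubeTiling1 (T : Set ℝ) : Prop :=
  (∀ s ∈ T, ∀ t ∈ T, s ≠ t → Disjoint (Set.Ico s (s + 1)) (Set.Ico t (t + 1))) ∧
  (⋃ t ∈ T, Set.Ico t (t + 1)) = Set.univ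

/-- The tiling determined by `T` contains a column: there are `s ∈ ℝⁿ` and a
standard basis vector `eᵢ` such that `s + k·eᵢ ∈ T` for every `k ∈ ℤ`. -/
def ContainsColumn {n : ℕ} (T : Set (Fin n → ℝ)) : Prop :=
  ∃ s : Fin n → ℝ, ∃ i : Fin n, ∀ k : ℤ, (s + (k : ℝ) • (Pi.single i 1 : Fin n → ℝ)) ∈ T

/-- A natural code of `ℝⁿ`: each `ε j : ℝ → ℕ⁺` restricts to a bijection from
every coset `x + ℤ` onto the positive integers. -/
def IsNaturalCode {n : ℕ} (ε : Fin n → ℝ → ℕ+) : Prop :=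
  ∀ j : Fin n, ∀ x : ℝ, Set.BijOn (ε j) {y : ℝ | ∃ m : ℤ, y = x + m} Set.univ

namespace KellerAux

variable {n : ℕ}

lemma exists_cover {T : Set (Fin n → ℝ)} (hT : IsCubeTiling T) (x : Fin n → ℝ) :
    ∃ u ∈ T, x ∈ Cube u := by
  have hx : x ∈ (⋃ t ∈ T, Cube t) := hT.2 ▸ Set.mem_univ x
  simpa using hx

lemma unique_cover {T : Set (Fin n → ℝ)} (hT : IsCubeTiling T) {u v x : Fin n → ℝ}
    (hu : u ∈ T) (hv : v ∈ T) (hxu : x ∈ Cube u) (hxv : x ∈ Cube v) : u = v := by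
  by_contra hne
  exact Set.disjoint_left.mp (hT.1 u hu v hv hne) hxu hxv

/-- `u` meets the line through `x` in direction `i`. -/
def OnLine (x : Fin n → ℝ) (i : Fin n) (u : Fin n → ℝ) : Prop :=
  ∀ j, j ≠ i → u j ≤ x j ∧ x j < u j + 1

lemma onLine_of_cover {x u : Fin n → ℝ} {i : Fin n} (h : x ∈ Cube u) : OnLine x i u :=
  fun j _ => h j

lemma line_ladder {T : Set (Fin n → ℝ)} (hT : IsCubeTiling T) (x : Fin n → ℝ) (i : Fin n)
    {u : Fin n → ℝ} (hu : u ∈ T) (hlu : OnLine x i u) :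
    ∀ k : ℕ, ∃ w ∈ T, OnLine x i w ∧ w i = u i + k := by
  intro k
  induction k with
  | zero => exact ⟨u, hu, hlu, by simp⟩
  | succ k ih =>
    obtain ⟨w, hw, hlw, hwk⟩ := ih
    obtain ⟨w', hw', hcov⟩ := exists_cover hT (Function.update x i (w i + 1))
    have hlw' : OnLine x i w' := by
      intro j hj
      have := hcov j
      rwa [Function.update_of_ne hj] at this
    have hi := hcov i
    rw [Function.update_self] at hi
    have hkey : w' i = w i + 1 := by
      by_contra hne
      have h1 : w' i < w i + 1 := lt_of_le_of_ne hi.1 hne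
      have h2 : w i < w' i := by linarith [hi.2]
      have hxw : Function.update x i (w' i) ∈ Cube w := by
        intro j
        by_cases hj : j = i
        · subst hj; rw [Function.update_self]; exact ⟨le_of_lt h2, h1⟩
        · rw [Function.update_of_ne hj]; exact hlw j hj
      have hxw' : Function.update x i (w' i) ∈ Cube w' := by
        intro j
        by_cases hj : j = i
        · subst hj; rw [Function.update_self]; exact ⟨le_refl _, by linarith⟩
        · rw [Function.update_of_ne hj]; exact hlw' j hj
      have heq := unique_cover hT hw hw' hxw hxw'
      rw [heq] at h2
      exact lt_irrefl _ h2
    refine ⟨w', hw', hlw', ?_⟩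
    rw [hkey, hwk]
    push_cast
    ring

lemma line_int_of_le {T : Set (Fin n → ℝ)} (hT : IsCubeTiling T) (x : Fin n → ℝ) (i : Fin n)
    {u v : Fin n → ℝ} (hu : u ∈ T) (hv : v ∈ T)
    (hlu : OnLine x i u) (hlv : OnLine x i v) (h : u i ≤ v i) :
    ∃ m : ℤ, v i - u i = m := by
  have hd0 : (0 : ℝ) ≤ v i - u i := by linarith
  obtain ⟨w, hw, hlw, hwk⟩ := line_ladder hT x i hu hlu (⌊v i - u i⌋.toNat)
  have hcast : ((⌊v i - u i⌋.toNat : ℕ) : ℝ) = ((⌊v i - u i⌋ : ℤ) : ℝ) := by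
    norm_cast
    exact Int.toNat_of_nonneg (Int.floor_nonneg.mpr hd0)
  rw [hcast] at hwk
  have hfl : ((⌊v i - u i⌋ : ℤ) : ℝ) ≤ v i - u i := Int.floor_le _
  have hfu : v i - u i < ((⌊v i - u i⌋ : ℤ) : ℝ) + 1 := Int.lt_floor_add_one _
  have hxv : Function.update x i (v i) ∈ Cube v := by
    intro j
    by_cases hj : j = i
    · subst hj; rw [Function.update_self]; exact ⟨le_refl _, by linarith⟩
    · rw [Function.update_of_ne hj]; exact hlv j hj
  have hxw : Function.update x i (v i) ∈ Cube w := by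
    intro j
    by_cases hj : j = i
    · subst hj; rw [Function.update_self, hwk]
      constructor
      · linarith
      · linarith
    · rw [Function.update_of_ne hj]; exact hlw j hj
  have heq := unique_cover hT hv hw hxv hxw
  exact ⟨⌊v i - u i⌋, by have hvi : v i = w i := congrFun heq i; linarith⟩

lemma line_int {T : Set (Fin n → ℝ)} (hT : IsCubeTiling T) (x : Fin n → ℝ) (i : Fin n)
    {u v : Fin n → ℝ} (hu : u ∈ T) (hv : v ∈ T)
    (hlu : OnLine x i u) (hlv : OnLine x i v) :
    ∃ m : ℤ, v i - u i = m := by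
  rcases le_total (u i) (v i) with h | h
  · exact line_int_of_le hT x i hu hv hlu hlv h
  · obtain ⟨m, hm⟩ := line_int_of_le hT x i hv hu hlv hlu h
    exact ⟨-m, by push_cast; linarith⟩

open Classical in
/-- Shift by `c • eᵢ` every cube whose `i`-th coordinate is congruent to `a` mod `ℤ`. -/
noncomputable def shiftFun (i : Fin n) (a c : ℝ) (u : Fin n → ℝ) : Fin n → ℝ :=
  if ∃ m : ℤ, u i = a + m then u + c • (Pi.single i 1 : Fin n → ℝ) else u

lemma shiftFun_pos {i : Fin n} {a c : ℝ} {u : Fin n → ℝ} (h : ∃ m : ℤ, u i = a + m) :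
    shiftFun i a c u = u + c • (Pi.single i 1 : Fin n → ℝ) := by
  rw [shiftFun, if_pos h]

lemma shiftFun_neg {i : Fin n} {a c : ℝ} {u : Fin n → ℝ} (h : ¬ ∃ m : ℤ, u i = a + m) :
    shiftFun i a c u = u := by
  rw [shiftFun, if_neg h]

lemma add_single_apply_ne {i j : Fin n} (hj : j ≠ i) (u : Fin n → ℝ) (c : ℝ) :
    (u + c • (Pi.single i 1 : Fin n → ℝ)) j = u j := by
  simp [Pi.single_eq_of_ne hj]

lemma add_single_apply_eq (i : Fin n) (u : Fin n → ℝ) (c : ℝ) :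
    (u + c • (Pi.single i 1 : Fin n → ℝ)) i = u i + c := by
  simp

/-- The shift lemma: shifting a full residue class in one direction preserves tilings. -/
lemma shift_tiling {T : Set (Fin n → ℝ)} (hT : IsCubeTiling T) (i : Fin n) (a c : ℝ) :
    IsCubeTiling (shiftFun i a c '' T) := by
  constructor
  · rintro s' ⟨u, hu, rfl⟩ t' ⟨v, hv, rfl⟩ hne
    have hune : u ≠ v := fun h => hne (by rw [h])
    rw [Set.disjoint_left]
    intro p hps hpt
    by_cases hcu : ∃ m : ℤ, u i = a + m <;> by_cases hcv : ∃ m : ℤ, v i = a + m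
    · -- both shifted
      rw [shiftFun_pos hcu] at hps
      rw [shiftFun_pos hcv] at hpt
      have hq : ∀ w : Fin n → ℝ, p ∈ Cube (w + c • (Pi.single i 1 : Fin n → ℝ)) →
          Function.update p i (p i - c) ∈ Cube w := by
        intro w hw j
        by_cases hj : j = i
        · subst hj
          rw [Function.update_self]
          have := hw j
          rw [add_single_apply_eq] at this
          exact ⟨by linarith [this.1], by linarith [this.2]⟩
        · rw [Function.update_of_ne hj]
          have := hw j
          rwa [add_single_apply_ne hj] at this
      exact hune (unique_cover hT hu hv (hq u hps) (hq v hpt))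
    · -- u shifted, v not
      rw [shiftFun_pos hcu] at hps
      rw [shiftFun_neg hcv] at hpt
      have hlu : OnLine p i u := by
        intro j hj
        have := hps j
        rwa [add_single_apply_ne hj] at this
      have hlv : OnLine p i v := onLine_of_cover hpt
      obtain ⟨m, hm⟩ := line_int hT p i hu hv hlu hlv
      obtain ⟨m', hm'⟩ := hcu
      exact hcv ⟨m' + m, by push_cast; linarith⟩
    · -- v shifted, u not
      rw [shiftFun_neg hcu] at hps
      rw [shiftFun_pos hcv] at hpt
      have hlv : OnLine p i v := by
        intro j hj
        have := hpt j
        rwa [add_single_apply_ne hj] at this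
      have hlu : OnLine p i u := onLine_of_cover hps
      obtain ⟨m, hm⟩ := line_int hT p i hv hu hlv hlu
      obtain ⟨m', hm'⟩ := hcv
      exact hcu ⟨m' + m, by push_cast; linarith⟩
    · rw [shiftFun_neg hcu] at hps
      rw [shiftFun_neg hcv] at hpt
      exact hune (unique_cover hT hu hv hps hpt)
  · apply Set.eq_univ_of_forall
    intro p
    rw [Set.mem_iUnion₂]
    obtain ⟨u₀, hu₀, hp₀⟩ := exists_cover hT p
    by_cases h : ∃ m : ℤ, u₀ i = a + m
    · obtain ⟨u, hu, hq⟩ := exists_cover hT (p - c • (Pi.single i 1 : Fin n → ℝ))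
      have hline_u : OnLine p i u := by
        intro j hj
        have := hq j
        have hval : (p - c • (Pi.single i 1 : Fin n → ℝ)) j = p j := by
          simp [Pi.single_eq_of_ne hj]
        rwa [hval] at this
      have hline_u₀ : OnLine p i u₀ := onLine_of_cover hp₀
      obtain ⟨m, hm⟩ := line_int hT p i hu₀ hu hline_u₀ hline_u
      obtain ⟨m', hm'⟩ := h
      have hu_class : ∃ k : ℤ, u i = a + k := ⟨m' + m, by push_cast; linarith⟩
      refine ⟨shiftFun i a c u, ⟨u, hu, rfl⟩, ?_⟩
      rw [shiftFun_pos hu_class]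
      intro j
      by_cases hj : j = i
      · subst hj
        rw [add_single_apply_eq]
        have := hq j
        have hval : (p - c • (Pi.single j 1 : Fin n → ℝ)) j = p j - c := by simp
        rw [hval] at this
        exact ⟨by linarith [this.1], by linarith [this.2]⟩
      · rw [add_single_apply_ne hj]
        exact hline_u j hj
    · refine ⟨shiftFun i a c u₀, ⟨u₀, hu₀, rfl⟩, ?_⟩
      rwa [shiftFun_neg h]

/-- Main induction: there is no "bad pair" `s ≠ t` in a tiling whose coordinate
differences are all non-integers (outside `J` the coordinates agree). -/
lemma no_bad_pair : ∀ N : ℕ, ∀ (J : Finset (Fin n)) (T : Set (Fin n → ℝ)),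
    J.card ≤ N → IsCubeTiling T → ∀ s ∈ T, ∀ t ∈ T, s ≠ t →
    (∀ j, j ∉ J → s j = t j) → (∀ j ∈ J, ∀ m : ℤ, s j - t j ≠ m) → False := by
  intro N
  induction N with
  | zero =>
    intro J T hcard hT s hs t ht hne hout _
    have : J = ∅ := Finset.card_eq_zero.mp (Nat.le_zero.mp hcard)
    subst this
    exact hne (funext fun j => hout j (Finset.notMem_empty j))
  | succ N ih =>
    intro J T hcard hT s hs t ht hne hout hin
    rcases J.eq_empty_or_nonempty with rfl | ⟨j, hj⟩
    · exact hne (funext fun j => hout j (Finset.notMem_empty j))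
    rcases (J.erase j).eq_empty_or_nonempty with herase | ⟨k, hk⟩
    · -- s and t differ only in coordinate j: use the line lemma directly
      have hlu : OnLine s j s := fun l _ => ⟨le_refl _, by linarith⟩
      have hlv : OnLine s j t := by
        intro l hl
        have hlJ : l ∉ J := by
          intro hmem
          exact hl (Finset.mem_singleton.mp
            (by rw [← Finset.insert_erase hj, herase] at hmem; simpa using hmem))
        rw [hout l hlJ]
        exact ⟨le_refl _, by linarith⟩
      obtain ⟨m, hm⟩ := line_int hT s j hs ht hlu hlv
      exact hin j hj (-m) (by push_cast; linarith)
    · -- shift the residue class of `t j` in direction `j` by `s j - t j`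
      set c : ℝ := s j - t j with hc
      set T' : Set (Fin n → ℝ) := shiftFun j (t j) c '' T with hT'def
      have hT' : IsCubeTiling T' := shift_tiling hT j (t j) c
      have hs_class : ¬ ∃ m : ℤ, s j = t j + m := by
        rintro ⟨m, hm⟩
        exact hin j hj m (by linarith)
      have ht_class : ∃ m : ℤ, t j = t j + m := ⟨0, by simp⟩
      have hs' : s ∈ T' := ⟨s, hs, shiftFun_neg hs_class⟩
      set t' : Fin n → ℝ := t + c • (Pi.single j 1 : Fin n → ℝ) with ht'def
      have ht' : t' ∈ T' := ⟨t, ht, shiftFun_pos ht_class⟩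
      have ht'j : t' j = s j := by rw [ht'def, add_single_apply_eq]; ring
      have ht'other : ∀ l, l ≠ j → t' l = t l := by
        intro l hl
        rw [ht'def, add_single_apply_ne hl]
      have hne' : s ≠ t' := by
        intro heq
        have h1 := hin k (Finset.mem_of_mem_erase hk) 0
        rw [Int.cast_zero] at h1
        apply h1
        have h2 : s k = t k := by
          rw [heq]
          exact ht'other k (Finset.ne_of_mem_erase hk)
        rw [h2]; ring
      refine ih (J.erase j) T' ?_ hT' s hs' t' ht' hne' ?_ ?_
      · have hcc := Finset.card_erase_of_mem hj
        have hpos : 0 < J.card := Finset.card_pos.mpr ⟨j, hj⟩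
        omega
      · intro l hl
        by_cases hlj : l = j
        · subst hlj; exact ht'j.symm
        · rw [ht'other l hlj]
          exact hout l (fun hmem => hl (Finset.mem_erase.mpr ⟨hlj, hmem⟩))
      · intro l hl m
        rw [ht'other l (Finset.ne_of_mem_erase hl)]
        exact hin l (Finset.mem_of_mem_erase hl) m

end KellerAux

/-- (Keller's theorem) If `T` determines a cube tiling of `ℝⁿ`, then for each pair of
distinct elements `s, t ∈ T` there is `j` with `|s j − t j|` a positive integer. -/
theorem keller_integer_distance {n : ℕ} (T : Set (Fin n → ℝ)) (hT : IsCubeTiling T) :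
    ∀ s ∈ T, ∀ t ∈ T, s ≠ t → ∃ j : Fin n, ∃ m : ℕ, 0 < m ∧ |s j - t j| = m := by
  intro s hs t ht hne
  by_contra hcon
  push_neg at hcon
  set J : Finset (Fin n) := Finset.univ.filter (fun j => s j ≠ t j) with hJ
  refine KellerAux.no_bad_pair n J T ?_ hT s hs t ht hne ?_ ?_
  · calc J.card ≤ (Finset.univ : Finset (Fin n)).card := Finset.card_le_card (Finset.filter_subset _ _)
    _ = n := by simp
  · intro j hj
    by_contra h
    exact hj (Finset.mem_filter.mpr ⟨Finset.mem_univ j, h⟩)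
  · intro j hj m hm
    have hne_j : s j ≠ t j := (Finset.mem_filter.mp hj).2
    have hm0 : m ≠ 0 := by
      rintro rfl
      simp at hm
      exact hne_j (by linarith)
    have habs : |s j - t j| = ((m.natAbs : ℕ) : ℝ) := by
      rw [hm, Nat.cast_natAbs, Int.cast_abs]
    exact hcon j m.natAbs (Int.natAbs_pos.mpr hm0) habs
end

section
/- Fix a natural code ε : ℝⁿ → ℕⁿ. A set T ⊆ ℝⁿ determines a cube tiling of ℝⁿ if and only if ε(T) = ℕⁿ and for every pair of distinct elements s, t ∈ T there is an index j ∈ {1,…,n} such that |s_j − t_j| is a positive integer. -/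
open Set Int

lemma eq_of_fract_eq_of_mem_Ico {a b x : ℝ} (h : fract a = fract b)
    (ha : x ∈ Ico a (a + 1)) (hb : x ∈ Ico b (b + 1)) : a = b := by
  obtain ⟨k, hk⟩ := Int.fract_eq_fract.1 h
  have hk0 : k = 0 := by
    have h1 : k < 1 := by exact_mod_cast (show (k : ℝ) < 1 by linarith [ha.1, hb.2])
    have h2 : -1 < k := by exact_mod_cast (show (-1 : ℝ) < k by linarith [ha.2, hb.1])
    omega
  simp only [hk0, cast_zero, sub_eq_zero] at hk
  exact hk

def IsUnitTiling {α : Type*} (S : Set α) (p : α → ℝ) : Prop :=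
  ∀ r : ℝ, ∃! a, a ∈ S ∧ r ∈ Ico (p a) (p a + 1)

namespace IsUnitTiling

variable {α : Type*} {S : Set α} {p : α → ℝ}

lemma exists_add_one (h : IsUnitTiling S p) {a : α} (ha : a ∈ S) : ∃ b ∈ S, p b = p a + 1 := by
  obtain ⟨b, ⟨hb, hb₁, hb₂⟩, -⟩ := h (p a + 1)
  refine ⟨b, hb, le_antisymm hb₁ (not_lt.1 fun hlt => ?_)⟩
  have hba : b = a := (h (p b)).unique ⟨hb, left_mem_Ico.2 (lt_add_one _)⟩ ⟨ha, by linarith, hlt⟩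
  rw [hba] at hb₂
  linarith

lemma exists_sub_one (h : IsUnitTiling S p) {a : α} (ha : a ∈ S) : ∃ b ∈ S, p b = p a - 1 := by
  obtain ⟨b, ⟨hb, hb₁, hb₂⟩, -⟩ := h (p a - 1)
  obtain ⟨c, hc, hcb⟩ := h.exists_add_one hb
  have hca : c = a :=
    (h (p a)).unique ⟨hc, by linarith, by linarith⟩ ⟨ha, left_mem_Ico.2 (lt_add_one _)⟩
  exact ⟨b, hb, by rw [← hca]; linarith⟩

lemma exists_add_int (h : IsUnitTiling S p) {a : α} (ha : a ∈ S) (m : ℤ) :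
    ∃ b ∈ S, p b = p a + m := by
  induction m using Int.induction_on with
  | zero => exact ⟨a, ha, by simp⟩
  | succ k ih =>
    obtain ⟨b, hb, hba⟩ := ih
    obtain ⟨c, hc, hcb⟩ := h.exists_add_one hb
    exact ⟨c, hc, by push_cast at hba ⊢; linarith⟩
  | pred k ih =>
    obtain ⟨b, hb, hba⟩ := ih
    obtain ⟨c, hc, hcb⟩ := h.exists_sub_one hb
    exact ⟨c, hc, by push_cast at hba ⊢; linarith⟩

lemma fract_eq (h : IsUnitTiling S p) {a b : α} (ha : a ∈ S) (hb : b ∈ S) :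
    fract (p a) = fract (p b) := by
  obtain ⟨c, hc, hcb⟩ := h.exists_add_int hb ⌊p a - p b⌋
  have hca : c = a := (h (p a)).unique
    ⟨hc, by linarith [floor_le (p a - p b)], by linarith [lt_floor_add_one (p a - p b)]⟩
    ⟨ha, left_mem_Ico.2 (lt_add_one _)⟩
  subst hca
  exact Int.fract_eq_fract.2 ⟨_, by linarith⟩

/-- The left endpoints form a single coset of `ℤ`, on which `σ` acts as a translation. -/
theorem comp (h : IsUnitTiling S p) {σ : ℝ → ℝ} (hσ : ∀ y (m : ℤ), σ (y + m) = σ y + m) :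
    IsUnitTiling S (σ ∘ p) := by
  intro r
  obtain ⟨a, ⟨ha, -⟩, -⟩ := h 0
  obtain ⟨b, hb, hpb⟩ := h.exists_add_int ha ⌊r - σ (p a)⌋
  have hσb : σ (p b) = σ (p a) + ⌊r - σ (p a)⌋ := by rw [hpb, hσ]
  have hrb : r ∈ Ico (σ (p b)) (σ (p b) + 1) := by
    rw [hσb]
    exact ⟨by linarith [floor_le (r - σ (p a))], by linarith [lt_floor_add_one (r - σ (p a))]⟩
  refine ⟨b, ⟨hb, hrb⟩, ?_⟩
  rintro c ⟨hc, hrc⟩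
  obtain ⟨k, hk⟩ := Int.fract_eq_fract.1 (h.fract_eq hc hb)
  have hσc : σ (p c) = σ (p b) + k := by rw [← hσ, ← hk, add_sub_cancel]
  have hσcb : σ (p c) = σ (p b) := eq_of_fract_eq_of_mem_Ico
    (by rw [hσc, fract_add_intCast]) hrc hrb
  have hpcb : p c = p b := by
    rw [hσcb, left_eq_add, cast_eq_zero] at hσc
    rw [hσc, cast_zero, sub_eq_zero] at hk
    exact hk
  exact (h (p b)).unique ⟨hc, by rw [hpcb]; exact left_mem_Ico.2 (lt_add_one _)⟩
    ⟨hb, left_mem_Ico.2 (lt_add_one _)⟩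

end IsUnitTiling

section CubeTilings

variable {n : ℕ}

lemma self_mem_cube (t : Fin n → ℝ) : t ∈ Cube t := fun _ => left_mem_Ico.2 (lt_add_one _)

lemma update_mem_cube_iff {t x : Fin n → ℝ} {i : Fin n} {r : ℝ} :
    Function.update x i r ∈ Cube t ↔
      r ∈ Ico (t i) (t i + 1) ∧ ∀ j ≠ i, x j ∈ Ico (t j) (t j + 1) :=
  Function.forall_update_iff x fun j y => y ∈ Ico (t j) (t j + 1)

lemma mem_cube_update_iff {t x : Fin n → ℝ} {i : Fin n} {r : ℝ} :
    x ∈ Cube (Function.update t i r) ↔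
      x i ∈ Ico r (r + 1) ∧ ∀ j ≠ i, x j ∈ Ico (t j) (t j + 1) :=
  Function.forall_update_iff t fun j y => x j ∈ Ico y (y + 1)

lemma isCubeTiling_iff_existsUnique {T : Set (Fin n → ℝ)} :
    IsCubeTiling T ↔ ∀ x, ∃! t, t ∈ T ∧ x ∈ Cube t := by
  refine ⟨fun ⟨hdisj, hcover⟩ x => ?_, fun h => ⟨?_, ?_⟩⟩
  · obtain ⟨t, ht, hxt⟩ := mem_iUnion₂.1 (hcover ▸ mem_univ x)
    refine ⟨t, ⟨ht, hxt⟩, fun s ⟨hs, hxs⟩ => ?_⟩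
    by_contra hst
    exact disjoint_left.1 (hdisj s hs t ht hst) hxs hxt
  · intro s hs t ht hst
    refine disjoint_left.2 fun x hxs hxt => hst ?_
    exact (h x).unique ⟨hs, hxs⟩ ⟨ht, hxt⟩
  · refine eq_univ_of_forall fun x => ?_
    obtain ⟨t, ⟨ht, hxt⟩, -⟩ := h x
    exact mem_biUnion ht hxt

lemma isCubeTiling_image_of_existsUnique {T : Set (Fin n → ℝ)} {f : (Fin n → ℝ) → Fin n → ℝ}
    (h : ∀ x, ∃! t, t ∈ T ∧ x ∈ Cube (f t)) : IsCubeTiling (f '' T) ∧ InjOn f T := by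
  refine ⟨isCubeTiling_iff_existsUnique.2 fun x => ?_, fun s hs t ht hst => ?_⟩
  · obtain ⟨t, ⟨ht, hxt⟩, huniq⟩ := h x
    refine ⟨f t, ⟨mem_image_of_mem f ht, hxt⟩, ?_⟩
    rintro _ ⟨⟨s, hs, rfl⟩, hxs⟩
    rw [huniq s ⟨hs, hxs⟩]
  · exact (h (f s)).unique ⟨hs, self_mem_cube _⟩ ⟨ht, hst ▸ self_mem_cube _⟩

namespace IsCubeTiling

variable {T : Set (Fin n → ℝ)}

lemma isUnitTiling_slab (hT : IsCubeTiling T) (x : Fin n → ℝ) (i : Fin n) :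
    IsUnitTiling {t ∈ T | ∀ j ≠ i, x j ∈ Ico (t j) (t j + 1)} (· i) := fun r =>
  (existsUnique_congr fun t => by rw [update_mem_cube_iff, mem_sep_iff]; tauto).1
    (isCubeTiling_iff_existsUnique.1 hT (Function.update x i r))

lemma existsUnique_mem_cube_update (hT : IsCubeTiling T) (i : Fin n) {σ : ℝ → ℝ}
    (hσ : ∀ y (m : ℤ), σ (y + m) = σ y + m) (x : Fin n → ℝ) :
    ∃! t, t ∈ T ∧ x ∈ Cube (Function.update t i (σ (t i))) :=
  (existsUnique_congr fun t => by rw [mem_cube_update_iff, mem_sep_iff]; tauto).1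
    ((hT.isUnitTiling_slab x i).comp hσ (x i))

theorem image_piMap (hT : IsCubeTiling T) {σ : Fin n → ℝ → ℝ}
    (hσ : ∀ j y (m : ℤ), σ j (y + m) = σ j y + m) :
    IsCubeTiling (Pi.map σ '' T) ∧ InjOn (Pi.map σ) T := by
  have hid : ∀ j ∉ (Finset.univ : Finset (Fin n)), σ j = id :=
    fun j hj => absurd (Finset.mem_univ j) hj
  generalize (Finset.univ : Finset (Fin n)) = F at hid
  induction F using Finset.induction_on generalizing σ T with
  | empty =>
    have : Pi.map σ = id := funext fun t => funext fun j => by simp [hid j (Finset.notMem_empty j)]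
    rw [this, image_id]
    exact ⟨hT, injOn_id T⟩
  | insert i F _ ih =>
    set σ' := Function.update σ i id
    have hsplit : Pi.map σ = Pi.map σ' ∘ fun t => Function.update t i (σ i (t i)) := by
      funext t j
      rcases eq_or_ne j i with rfl | hj <;> simp [σ', *]
    have hσ' : ∀ j y (m : ℤ), σ' j (y + m) = σ' j y + m := by
      intro j y m
      rcases eq_or_ne j i with rfl | hj <;> simp [σ', *]
    have hid' : ∀ j ∉ F, σ' j = id := by
      intro j hj
      rcases eq_or_ne j i with rfl | hji
      · simp [σ']
      · simpa [σ', hji] using hid j (by simp [hji, hj])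
    obtain ⟨hT₁, hinj₁⟩ :=
      isCubeTiling_image_of_existsUnique (hT.existsUnique_mem_cube_update i (hσ i))
    obtain ⟨hT₂, hinj₂⟩ := ih hT₁ hσ' hid'
    rw [hsplit, image_comp]
    exact ⟨hT₂, hinj₂.comp hinj₁ (mapsTo_image _ _)⟩

end IsCubeTiling

end CubeTilings

lemma mem_setOf_eq_add_int_iff {x y : ℝ} :
    y ∈ {y : ℝ | ∃ m : ℤ, y = x + m} ↔ fract y = fract x := by
  show (∃ m : ℤ, y = x + m) ↔ _
  simp_rw [Int.fract_eq_fract, sub_eq_iff_eq_add']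

lemma exists_pos_nat_abs_sub_eq_iff {a b : ℝ} :
    (∃ m : ℕ, 0 < m ∧ |a - b| = m) ↔ a ≠ b ∧ fract a = fract b := by
  rw [Int.fract_eq_fract]
  constructor
  · rintro ⟨m, hm, hab⟩
    refine ⟨fun h => ?_, ?_⟩
    · rw [h, sub_self, abs_zero, eq_comm, Nat.cast_eq_zero] at hab
      omega
    · rcases (abs_eq (Nat.cast_nonneg m)).1 hab with h | h
      exacts [⟨m, by simp [h]⟩, ⟨-m, by simp [h]⟩]
  · rintro ⟨hne, k, hk⟩
    refine ⟨k.natAbs, Int.natAbs_pos.2 ?_, by rw [hk, Nat.cast_natAbs, cast_abs]⟩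
    rintro rfl
    exact hne (sub_eq_zero.1 (by simpa using hk))

namespace IsNaturalCode

variable {n : ℕ} {ε : Fin n → ℝ → ℕ+}

lemma eq_of_fract_eq (hε : IsNaturalCode ε) {j : Fin n} {y z : ℝ} (h : fract y = fract z)
    (hc : ε j y = ε j z) : y = z :=
  (hε j y).injOn (mem_setOf_eq_add_int_iff.2 rfl) (mem_setOf_eq_add_int_iff.2 h.symm) hc

lemma exists_fract_eq (hε : IsNaturalCode ε) (j : Fin n) (y : ℝ) (k : ℕ+) :
    ∃ w, fract w = fract y ∧ ε j w = k := by
  obtain ⟨w, hw, hwk⟩ := (hε j y).surjOn (mem_univ k)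
  exact ⟨w, mem_setOf_eq_add_int_iff.1 hw, hwk⟩

end IsNaturalCode

namespace IsCubeTiling

variable {n : ℕ} {T : Set (Fin n → ℝ)}

/-- Relabel each coset `y + ℤ` so that its element of code `a j` becomes `0`: the cube of the
relabelled tiling containing the origin then has code `a`. -/
lemma code_image_eq_univ (hT : IsCubeTiling T) {ε : Fin n → ℝ → ℕ+} (hε : IsNaturalCode ε) :
    (fun t j => ε j (t j)) '' T = univ := by
  refine eq_univ_of_forall fun a => ?_
  choose w hw hwa using fun j y => hε.exists_fract_eq j y (a j)
  have hw_add : ∀ j y (m : ℤ), w j (y + m) = w j y := fun j y m =>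
    hε.eq_of_fract_eq (by rw [hw, hw, fract_add_intCast]) (by rw [hwa, hwa])
  obtain ⟨hT', -⟩ := hT.image_piMap (σ := fun j y => y - w j y)
    fun j y m => by simp only [hw_add]; ring
  obtain ⟨_, ⟨⟨t, ht, rfl⟩, h0⟩, -⟩ := isCubeTiling_iff_existsUnique.1 hT' 0
  refine ⟨t, ht, funext fun j => ?_⟩
  have h0j : t j - w j (t j) ≤ 0 ∧ 0 < t j - w j (t j) + 1 := h0 j
  have htw : t j = w j (t j) := eq_of_fract_eq_of_mem_Ico (hw j (t j)).symm
    ⟨by linarith, by linarith⟩ (left_mem_Ico.2 (lt_add_one _))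
  calc ε j (t j) = ε j (w j (t j)) := congrArg _ htw
    _ = a j := hwa j _

/-- Translating the coset of each `t j` by `s j - t j` maps `t` onto `s` and fixes `s`. -/
lemma exists_ne_fract_eq (hT : IsCubeTiling T) {s t : Fin n → ℝ} (hs : s ∈ T) (ht : t ∈ T)
    (hst : s ≠ t) : ∃ j, s j ≠ t j ∧ fract (s j) = fract (t j) := by
  classical
  by_contra! h
  let σ : Fin n → ℝ → ℝ := fun j y => if fract y = fract (t j) then y + (s j - t j) else y
  have hσ : ∀ j y (m : ℤ), σ j (y + m) = σ j y + m := by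
    intro j y m
    simp only [σ, fract_add_intCast]
    split_ifs <;> ring
  have hσt : Pi.map σ t = s := funext fun j => by simp [σ]
  have hσs : Pi.map σ s = s := funext fun j => by
    by_cases hj : s j = t j
    · simp [σ, hj]
    · simp [σ, h j hj]
  exact hst ((hT.image_piMap hσ).2 hs ht (hσs.trans hσt.symm))

end IsCubeTiling

section CodeConditions

variable {n : ℕ} {ε : Fin n → ℝ → ℕ+} {T : Set (Fin n → ℝ)}

lemma fract_eq_of_code_eq (hε : IsNaturalCode ε)
    (hpair : ∀ s ∈ T, ∀ t ∈ T, s ≠ t → ∃ j, s j ≠ t j ∧ fract (s j) = fract (t j))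
    {x : Fin n → ℝ} {F : Finset (Fin n)} {i : Fin n} {s t : Fin n → ℝ} (hs : s ∈ T) (ht : t ∈ T)
    (hsF : ∀ j ∈ F, x j ∈ Ico (s j) (s j + 1)) (htF : ∀ j ∈ F, x j ∈ Ico (t j) (t j + 1))
    (hcode : ∀ j ∉ insert i F, ε j (s j) = ε j (t j)) : fract (s i) = fract (t i) := by
  by_cases hst : s = t
  · rw [hst]
  obtain ⟨j, hj, hfr⟩ := hpair s hs t ht hst
  by_cases hji : j = i
  · rwa [← hji]
  refine absurd ?_ hj
  by_cases hjF : j ∈ F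
  · exact eq_of_fract_eq_of_mem_Ico hfr (hsF j hjF) (htF j hjF)
  · exact hε.eq_of_fract_eq hfr (hcode j (by simp [hji, hjF]))

lemma exists_mem_cube_on_finset (hε : IsNaturalCode ε)
    (hsurj : (fun t j => ε j (t j)) '' T = univ)
    (hpair : ∀ s ∈ T, ∀ t ∈ T, s ≠ t → ∃ j, s j ≠ t j ∧ fract (s j) = fract (t j))
    (x : Fin n → ℝ) (F : Finset (Fin n)) (a : Fin n → ℕ+) :
    ∃ t ∈ T, (∀ j ∈ F, x j ∈ Ico (t j) (t j + 1)) ∧ ∀ j ∉ F, ε j (t j) = a j := by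
  induction F using Finset.induction_on generalizing a with
  | empty =>
    obtain ⟨t, ht, hta⟩ := hsurj ▸ mem_univ a
    exact ⟨t, ht, by simp, fun j _ => congrFun hta j⟩
  | insert i F hi ih =>
    obtain ⟨t₀, ht₀, ht₀F, ht₀a⟩ := ih a
    -- `x i ∈ [z, z + 1)`, and the cube of `i`-th code `ε i z` is forced to sit at `z`
    set z := t₀ i + ⌊x i - t₀ i⌋
    obtain ⟨t, ht, htF, hta⟩ := ih (Function.update a i (ε i z))
    have hcode : ∀ j ∉ insert i F, ε j (t j) = ε j (t₀ j) := fun j hj => by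
      rw [hta j (by simp_all), ht₀a j (by simp_all), Function.update_of_ne (by simp_all)]
    have htz : t i = z := hε.eq_of_fract_eq
      (by rw [fract_eq_of_code_eq hε hpair ht ht₀ htF ht₀F hcode, fract_add_intCast])
      (by simpa using hta i hi)
    refine ⟨t, ht, fun j hj => ?_, fun j hj => ?_⟩
    · rcases Finset.mem_insert.1 hj with rfl | hjF
      · rw [htz]
        exact ⟨by linarith [floor_le (x j - t₀ j)], by linarith [lt_floor_add_one (x j - t₀ j)]⟩
      · exact htF j hjF
    · rw [hta j (by simp_all), Function.update_of_ne (by simp_all)]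

lemma isCubeTiling_of_code (hε : IsNaturalCode ε) (hsurj : (fun t j => ε j (t j)) '' T = univ)
    (hpair : ∀ s ∈ T, ∀ t ∈ T, s ≠ t → ∃ j, s j ≠ t j ∧ fract (s j) = fract (t j)) :
    IsCubeTiling T := by
  refine isCubeTiling_iff_existsUnique.2 fun x => ?_
  obtain ⟨t, ht, htx, -⟩ := exists_mem_cube_on_finset hε hsurj hpair x Finset.univ 1
  refine ⟨t, ⟨ht, fun j => htx j (Finset.mem_univ j)⟩, fun s ⟨hs, hxs⟩ => ?_⟩
  by_contra hst
  obtain ⟨j, hj, hfr⟩ := hpair s hs t ht hst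
  exact hj (eq_of_fract_eq_of_mem_Ico hfr (hxs j) (htx j (Finset.mem_univ j)))

end CodeConditions

/-- Characterization of cube tilings via a natural code. -/
theorem cube_tiling_iff_code {n : ℕ} (ε : Fin n → ℝ → ℕ+) (hε : IsNaturalCode ε)
    (T : Set (Fin n → ℝ)) :
    IsCubeTiling T ↔
      ((fun t : Fin n → ℝ => fun j => ε j (t j)) '' T = Set.univ ∧
        ∀ s ∈ T, ∀ t ∈ T, s ≠ t → ∃ j : Fin n, ∃ m : ℕ, 0 < m ∧ |s j - t j| = m) := by
  simp only [exists_pos_nat_abs_sub_eq_iff]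
  exact ⟨fun hT => ⟨hT.code_image_eq_univ hε, fun s hs t ht hst => hT.exists_ne_fract_eq hs ht hst⟩,
    fun ⟨hsurj, hpair⟩ => isCubeTiling_of_code hε hsurj hpair⟩
end

section
/- Fix a natural code ε : ℝⁿ → ℕⁿ. If T ⊆ ℝⁿ determines a cube tiling of ℝⁿ, then ε maps T onto ℕⁿ, i.e., ε(T) = ℕⁿ. -/
/-! Induction on the dimension. The first coordinates of the tiles whose cubes meet a line
`ℝ × {x}` form a tiling of `ℝ` by unit intervals, hence a single coset of `ℤ`; as `ε₀` is a
bijection on that coset, exactly one of these tiles has any prescribed first code `k`.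
So the tiles with first code `k`, with their first coordinate dropped, tile `ℝⁿ⁻¹`, and the
induction hypothesis applies to them with the code `(ε₁, …, εₙ₋₁)`. -/

open Set

namespace IsCubeTiling1

variable {S : Set ℝ}

lemma exists_mem_Ico (hS : IsCubeTiling1 S) (x : ℝ) : ∃ t ∈ S, x ∈ Ico t (t + 1) := by
  have hx : x ∈ ⋃ t ∈ S, Ico t (t + 1) := hS.2.symm ▸ mem_univ x
  simpa only [mem_iUnion, exists_prop] using hx

lemma add_one_le_of_lt (hS : IsCubeTiling1 S) {s u : ℝ} (hs : s ∈ S) (hu : u ∈ S)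
    (hsu : s < u) : s + 1 ≤ u := by
  by_contra! h
  exact disjoint_left.mp (hS.1 s hs u hu hsu.ne) ⟨hsu.le, h⟩ ⟨le_rfl, by linarith⟩

lemma add_one_mem (hS : IsCubeTiling1 S) {s : ℝ} (hs : s ∈ S) : s + 1 ∈ S := by
  obtain ⟨u, hu, hu₁, hu₂⟩ := hS.exists_mem_Ico (s + 1)
  have := hS.add_one_le_of_lt hs hu (by linarith)
  rwa [show s + 1 = u by linarith]

lemma sub_one_mem (hS : IsCubeTiling1 S) {s : ℝ} (hs : s ∈ S) : s - 1 ∈ S := by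
  obtain ⟨u, hu, hu₁, hu₂⟩ := hS.exists_mem_Ico (s - 1)
  have h₁ : u + 1 ≤ s := hS.add_one_le_of_lt hu hs (by linarith)
  have h₂ : s ≤ u + 1 := by
    by_contra! h
    linarith [hS.add_one_le_of_lt (hS.add_one_mem hu) hs h]
  rwa [show s - 1 = u by linarith]

lemma add_int_mem (hS : IsCubeTiling1 S) {s : ℝ} (hs : s ∈ S) (m : ℤ) : s + m ∈ S := by
  induction m using Int.induction_on with
  | zero => simpa
  | succ k ih => simpa [add_assoc] using hS.add_one_mem ih
  | pred k ih => simpa [sub_eq_add_neg, add_assoc] using hS.sub_one_mem ih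

lemma eq_coset (hS : IsCubeTiling1 S) {s : ℝ} (hs : s ∈ S) :
    S = {y | ∃ m : ℤ, y = s + m} := by
  ext u
  refine ⟨fun hu => ⟨⌊u - s⌋, ?_⟩, fun ⟨m, hm⟩ => hm ▸ hS.add_int_mem hs m⟩
  have hv := hS.add_int_mem hs ⌊u - s⌋
  have h₁ := Int.floor_le (u - s)
  have h₂ := Int.lt_floor_add_one (u - s)
  by_contra hne
  linarith [hS.add_one_le_of_lt hv hu (lt_of_le_of_ne (by linarith) (Ne.symm hne))]

lemma bijOn {α : Type*} {f : ℝ → α} {A : Set α}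
    (hf : ∀ x, BijOn f {y | ∃ m : ℤ, y = x + m} A) (hS : IsCubeTiling1 S) : BijOn f S A := by
  obtain ⟨s, hs, -⟩ := hS.exists_mem_Ico 0
  exact hS.eq_coset hs ▸ hf s

end IsCubeTiling1

lemma cons_mem_cube_iff {n : ℕ} {t : Fin (n + 1) → ℝ} {r : ℝ} {x : Fin n → ℝ} :
    (Fin.cons r x : Fin (n + 1) → ℝ) ∈ Cube t ↔
      r ∈ Ico (t 0) (t 0 + 1) ∧ x ∈ Cube (Fin.tail t) := by
  simp [Cube, Fin.forall_fin_succ, Fin.tail]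

/-- The first coordinates of the tiles whose cubes meet the line `ℝ × {x}`. -/
def lineSection {n : ℕ} (T : Set (Fin (n + 1) → ℝ)) (x : Fin n → ℝ) : Set ℝ :=
  (· 0) '' {t ∈ T | x ∈ Cube (Fin.tail t)}

def codeLayer {n : ℕ} {α : Type*} (T : Set (Fin (n + 1) → ℝ)) (f : ℝ → α) (k : α) :
    Set (Fin n → ℝ) :=
  Fin.tail '' {t ∈ T | f (t 0) = k}

namespace IsCubeTiling

variable {n : ℕ}

lemma exists_mem_cube {T : Set (Fin n → ℝ)} (hT : IsCubeTiling T) (x : Fin n → ℝ) :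
    ∃ t ∈ T, x ∈ Cube t := by
  have hx : x ∈ ⋃ t ∈ T, Cube t := hT.2.symm ▸ mem_univ x
  simpa only [mem_iUnion, exists_prop] using hx

lemma eq_of_mem_cube {T : Set (Fin n → ℝ)} (hT : IsCubeTiling T) {s t x : Fin n → ℝ}
    (hs : s ∈ T) (ht : t ∈ T) (hxs : x ∈ Cube s) (hxt : x ∈ Cube t) : s = t := by
  by_contra hne
  exact disjoint_left.mp (hT.1 s hs t ht hne) hxs hxt

lemma isCubeTiling1_lineSection {T : Set (Fin (n + 1) → ℝ)} (hT : IsCubeTiling T)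
    (x : Fin n → ℝ) :
    IsCubeTiling1 (lineSection T x) := by
  refine ⟨?_, ?_⟩
  · rintro _ ⟨s, ⟨hs, hxs⟩, rfl⟩ _ ⟨t, ⟨ht, hxt⟩, rfl⟩ hne
    refine disjoint_left.mpr fun r hrs hrt => hne ?_
    rw [hT.eq_of_mem_cube hs ht (cons_mem_cube_iff.mpr ⟨hrs, hxs⟩)
      (cons_mem_cube_iff.mpr ⟨hrt, hxt⟩)]
  · refine eq_univ_of_forall fun r => ?_
    obtain ⟨t, ht, hrt⟩ := hT.exists_mem_cube (Fin.cons r x)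
    rw [cons_mem_cube_iff] at hrt
    exact mem_iUnion₂.mpr ⟨t 0, ⟨t, ⟨ht, hrt.2⟩, rfl⟩, hrt.1⟩

lemma isCubeTiling_codeLayer {α : Type*} {f : ℝ → α}
    (hf : ∀ x, BijOn f {y | ∃ m : ℤ, y = x + m} univ) {T : Set (Fin (n + 1) → ℝ)} (hT : IsCubeTiling T) (k : α) :
    IsCubeTiling (codeLayer T f k) := by
  refine ⟨?_, ?_⟩
  · rintro _ ⟨s, ⟨hs, hsk⟩, rfl⟩ _ ⟨t, ⟨ht, htk⟩, rfl⟩ hne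
    refine disjoint_left.mpr fun x hxs hxt => hne ?_
    have h₀ : s 0 = t 0 := ((hT.isCubeTiling1_lineSection x).bijOn hf).injOn
      ⟨s, ⟨hs, hxs⟩, rfl⟩ ⟨t, ⟨ht, hxt⟩, rfl⟩ (hsk.trans htk.symm)
    rw [hT.eq_of_mem_cube hs ht (cons_mem_cube_iff.mpr ⟨⟨le_rfl, lt_add_one _⟩, hxs⟩)
      (cons_mem_cube_iff.mpr ⟨h₀ ▸ ⟨le_rfl, lt_add_one _⟩, hxt⟩)]
  · refine eq_univ_of_forall fun x => ?_
    obtain ⟨_, ⟨t, ⟨ht, hxt⟩, rfl⟩, htk⟩ :=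
      ((hT.isCubeTiling1_lineSection x).bijOn hf).surjOn (mem_univ k)
    exact mem_iUnion₂.mpr ⟨Fin.tail t, ⟨t, ⟨ht, htk⟩, rfl⟩, hxt⟩

lemma surjOn_code {ε : Fin n → ℝ → ℕ+} (hε : IsNaturalCode ε) {T : Set (Fin n → ℝ)}
    (hT : IsCubeTiling T) : SurjOn (fun t j => ε j (t j)) T univ := by
  induction n with
  | zero =>
    intro a _
    obtain ⟨t, ht, -⟩ := hT.exists_mem_cube 0
    exact ⟨t, ht, Subsingleton.elim _ _⟩
  | succ n ih =>
    intro a _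
    obtain ⟨_, ⟨t, ⟨ht, ht₀⟩, rfl⟩, htail⟩ :=
      ih (fun j => hε j.succ) (hT.isCubeTiling_codeLayer (hε 0) (a 0)) (mem_univ (Fin.tail a))
    exact ⟨t, ht, funext (Fin.cases ht₀ (congrFun htail))⟩

end IsCubeTiling

/-- A natural code maps any set determining a cube tiling of `ℝⁿ` onto `ℕⁿ`. -/
theorem code_surjective_on_tiling {n : ℕ} (ε : Fin n → ℝ → ℕ+) (hε : IsNaturalCode ε)
    (T : Set (Fin n → ℝ)) (hT : IsCubeTiling T) :
    (fun t : Fin n → ℝ => fun j => ε j (t j)) '' T = Set.univ :=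
  eq_univ_of_univ_subset (hT.surjOn_code hε)
end

section
/- Let n be a positive integer. If every cube tiling of ℝⁿ contains a column, then for each m > n every cube tiling of ℝᵐ contains an (n−1)-column. -/
/-- `S` determines an `l`-column in `ℝᵈ`: some coordinate projection maps `S`
bijectively onto a set determining a cube tiling of `ℝ`, and there are `l`
indices at which `S` is constant. -/
def DeterminesLColumn {d : ℕ} (l : ℕ) (S : Set (Fin d → ℝ)) : Prop :=
  (∃ i : Fin d, ∃ R : Set ℝ, IsCubeTiling1 R ∧ Set.BijOn (fun x => x i) S R) ∧
  (∃ J : Finset (Fin d), J.card = l ∧ ∀ j ∈ J, ∃ c : ℝ, ∀ x ∈ S, x j = c)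

/-- If every cube tiling of `ℝⁿ` contains a column, then every cube tiling of `ℝᵐ`,
`m > n`, contains an `(n−1)`-column. -/
theorem column_implies_lower_column (n : ℕ) (hn : 0 < n)
    (h : ∀ T : Set (Fin n → ℝ), IsCubeTiling T → ContainsColumn T) :
    ∀ m : ℕ, n < m → ∀ T : Set (Fin m → ℝ), IsCubeTiling T →
      ∃ S ⊆ T, DeterminesLColumn (n - 1) S := by
  intro m hm T hT
  have hnm : n ≤ m := hm.le
  -- lift u : Fin n → ℝ to Fin m → ℝ with 0 tail
  set lift : (Fin n → ℝ) → (Fin m → ℝ) :=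
    fun u j => if hj : (j : ℕ) < n then u ⟨j, hj⟩ else 0 with hlift
  have hliftcast : ∀ (u : Fin n → ℝ) (j : Fin n), lift u (Fin.castLE hnm j) = u j := by
    intro u j
    simp [hlift, j.isLt]
  set T' : Set (Fin n → ℝ) :=
    { u | ∃ t, t ∈ T ∧ (∀ j : Fin n, t (Fin.castLE hnm j) = u j) ∧
        (∀ j : Fin m, ¬ (j : ℕ) < n → t j ≤ 0 ∧ 0 < t j + 1) } with hT'def
  -- if u lies in the projected cube of t and t's tail contains 0, then lift u ∈ Cube t
  have hliftmem : ∀ (u : Fin n → ℝ) (t : Fin m → ℝ),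
      (∀ j : Fin m, ¬ (j : ℕ) < n → t j ≤ 0 ∧ 0 < t j + 1) →
      (∀ j : Fin n, t (Fin.castLE hnm j) ≤ u j ∧ u j < t (Fin.castLE hnm j) + 1) →
      lift u ∈ Cube t := by
    intro u t htail hcube j
    by_cases hj : (j : ℕ) < n
    · have := hcube ⟨j, hj⟩
      simpa [hlift, hj] using this
    · have := htail j hj
      simp only [hlift, hj, dif_neg, not_false_iff]
      exact ⟨this.1, this.2⟩
  have tiling' : IsCubeTiling T' := by
    constructor
    · rintro v ⟨t, htT, htp, htt⟩ w ⟨t', ht'T, ht'p, ht't⟩ hvw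
      rw [Set.disjoint_left]
      intro u huv huw
      have h1 : lift u ∈ Cube t := hliftmem u t htt (fun j => by rw [htp j]; exact huv j)
      have h2 : lift u ∈ Cube t' := hliftmem u t' ht't (fun j => by rw [ht'p j]; exact huw j)
      by_cases htt' : t = t'
      · apply hvw
        funext j
        rw [← htp j, htt', ht'p j]
      · exact Set.disjoint_left.mp (hT.1 t htT t' ht'T htt') h1 h2
    · ext u
      simp only [Set.mem_iUnion, Set.mem_univ, iff_true]
      have : lift u ∈ (⋃ t ∈ T, Cube t) := hT.2 ▸ Set.mem_univ _
      obtain ⟨t, htT, htc⟩ := Set.mem_iUnion₂.mp this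
      refine ⟨fun j => t (Fin.castLE hnm j), ⟨t, htT, fun j => rfl, ?_⟩, ?_⟩
      · intro j hj
        have := htc j
        simpa [hlift, hj] using this
      · intro j
        have := htc (Fin.castLE hnm j)
        rwa [hliftcast] at this
  obtain ⟨s, i, hcol⟩ := h T' tiling'
  choose tk h1 h2 _h3 using hcol
  have hval : ∀ k : ℤ, tk k (Fin.castLE hnm i) = s i + k := by
    intro k
    rw [h2 k i]
    simp
  refine ⟨Set.range tk, ?_, ?_, ?_⟩
  · rintro _ ⟨k, rfl⟩; exact h1 k
  · refine ⟨Fin.castLE hnm i, {y | ∃ k : ℤ, y = s i + k}, ⟨?_, ?_⟩, ?_, ?_, ?_⟩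
    · rintro _ ⟨k, rfl⟩ _ ⟨k', rfl⟩ hne
      rw [Set.Ico_disjoint_Ico]
      have hkk' : k ≠ k' := by rintro rfl; exact hne rfl
      rcases hkk'.lt_or_gt with hl | hl
      · have : (k : ℝ) + 1 ≤ (k' : ℝ) := by exact_mod_cast hl
        calc min (s i + k + 1) (s i + k' + 1) ≤ s i + k + 1 := min_le_left _ _
          _ ≤ s i + k' := by linarith
          _ ≤ max (s i + k) (s i + k') := le_max_right _ _
      · have : (k' : ℝ) + 1 ≤ (k : ℝ) := by exact_mod_cast hl
        calc min (s i + k + 1) (s i + k' + 1) ≤ s i + k' + 1 := min_le_right _ _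
          _ ≤ s i + k := by linarith
          _ ≤ max (s i + k) (s i + k') := le_max_left _ _
    · ext y
      simp only [Set.mem_iUnion, Set.mem_univ, iff_true]
      refine ⟨s i + ⌊y - s i⌋, ⟨⌊y - s i⌋, rfl⟩, ?_, ?_⟩
      · linarith [Int.floor_le (y - s i)]
      · linarith [Int.lt_floor_add_one (y - s i)]
    · rintro _ ⟨k, rfl⟩; exact ⟨k, hval k⟩
    · rintro _ ⟨k, rfl⟩ _ ⟨k', rfl⟩ heq
      have : s i + (k : ℝ) = s i + k' := by rw [← hval k, ← hval k']; exact heq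
      have : (k : ℝ) = k' := by linarith
      have : k = k' := by exact_mod_cast this
      rw [this]
    · rintro y ⟨k, rfl⟩
      exact ⟨tk k, ⟨k, rfl⟩, hval k⟩
  · refine ⟨(Finset.univ.erase i).image (Fin.castLE hnm), ?_, ?_⟩
    · rw [Finset.card_image_of_injective _ (Fin.castLE_injective hnm),
        Finset.card_erase_of_mem (Finset.mem_univ i), Finset.card_univ, Fintype.card_fin]
    · intro j hj
      obtain ⟨j₀, hj₀, rfl⟩ := Finset.mem_image.mp hj
      have hj₀i : j₀ ≠ i := Finset.ne_of_mem_erase hj₀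
      refine ⟨s j₀, ?_⟩
      rintro _ ⟨k, rfl⟩
      rw [h2 k j₀]
      simp [Pi.single_eq_of_ne hj₀i]
end

section
/- Let S ⊆ ℝⁿ determine a cube tiling of ℝⁿ, let k ∈ {1,…,n}, let α ∈ ℝ, and set V = {v ∈ S : v_k − α ∈ ℤ}. If ℓ is a straight line parallel to the k-th coordinate axis that intersects one of the cubes [0,1)ⁿ + v with v ∈ V, then ℓ is contained in the union ⋃_{v ∈ V} ([0,1)ⁿ + v). -/
/-- `v` is compatible with the line through `x` parallel to the `k`-th axis. -/
def LC {n : ℕ} (k : Fin n) (x : Fin n → ℝ) (v : Fin n → ℝ) : Prop :=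
  ∀ j, j ≠ k → v j ≤ x j ∧ x j < v j + 1

lemma update_mem_cube {n : ℕ} (k : Fin n) (x : Fin n → ℝ) {v : Fin n → ℝ}
    (hv : LC k x v) {t : ℝ} (h1 : v k ≤ t) (h2 : t < v k + 1) :
    Function.update x k t ∈ Cube v := by
  intro j
  by_cases hj : j = k
  · subst hj; simpa using ⟨h1, h2⟩
  · rw [Function.update_of_ne hj]; exact hv j hj

lemma cube_cover {n : ℕ} {S : Set (Fin n → ℝ)} (hS : IsCubeTiling S)
    (p : Fin n → ℝ) : ∃ v ∈ S, p ∈ Cube v := by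
  have : p ∈ ⋃ t ∈ S, Cube t := hS.2.symm ▸ Set.mem_univ p
  simpa using this

lemma meet_unique {n : ℕ} {S : Set (Fin n → ℝ)} (hS : IsCubeTiling S)
    (k : Fin n) (x : Fin n → ℝ) {u v : Fin n → ℝ} (hu : u ∈ S) (hv : v ∈ S)
    (hlu : LC k x u) (hlv : LC k x v) (h1 : v k ≤ u k) (h2 : u k < v k + 1) :
    u = v := by
  by_contra hne
  have hdisj := hS.1 u hu v hv hne
  exact Set.disjoint_left.mp hdisj
    (update_mem_cube k x hlu le_rfl (by linarith))
    (update_mem_cube k x hlv h1 h2)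

lemma forward_step {n : ℕ} {S : Set (Fin n → ℝ)} (hS : IsCubeTiling S)
    (k : Fin n) (x : Fin n → ℝ) {v : Fin n → ℝ} (hv : v ∈ S) (hlv : LC k x v) :
    ∃ w ∈ S, LC k x w ∧ w k = v k + 1 := by
  obtain ⟨w, hw, hpw⟩ := cube_cover hS (Function.update x k (v k + 1))
  have hlw : LC k x w := by
    intro j hj
    have := hpw j
    rwa [Function.update_of_ne hj] at this
  have hk := hpw k
  rw [Function.update_self] at hk
  refine ⟨w, hw, hlw, ?_⟩
  by_contra hne
  have h1 : w k < v k + 1 := lt_of_le_of_ne hk.1 hne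
  have h2 : v k < w k := by linarith [hk.2]
  have : w = v := meet_unique hS k x hw hv hlw hlv h2.le h1
  rw [this] at h2; exact lt_irrefl _ h2

lemma chain {n : ℕ} {S : Set (Fin n → ℝ)} (hS : IsCubeTiling S)
    (k : Fin n) (x : Fin n → ℝ) {v : Fin n → ℝ} (hv : v ∈ S) (hlv : LC k x v) :
    ∀ m : ℕ, ∃ w ∈ S, LC k x w ∧ w k = v k + m := by
  intro m
  induction m with
  | zero => exact ⟨v, hv, hlv, by simp⟩
  | succ m ih =>
    obtain ⟨w, hwS, hlw, hwk⟩ := ih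
    obtain ⟨w', hw'S, hlw', hw'k⟩ := forward_step hS k x hwS hlw
    exact ⟨w', hw'S, hlw', by rw [hw'k, hwk]; push_cast; ring⟩

/-- A line parallel to the `k`-th axis meeting one cube of
`V = {v ∈ S : v k − α ∈ ℤ}` lies in the union of cubes of `V`. -/
theorem line_covered_by_congruence_class {n : ℕ} (S : Set (Fin n → ℝ))
    (hS : IsCubeTiling S) (k : Fin n) (α : ℝ)
    (x : Fin n → ℝ)
    (hx : ∃ v ∈ {v ∈ S | ∃ m : ℤ, v k - α = m}, ∃ s : ℝ,
      (x + s • (Pi.single k 1 : Fin n → ℝ)) ∈ Cube v) :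
    ∀ s : ℝ, (x + s • (Pi.single k 1 : Fin n → ℝ)) ∈
      ⋃ v ∈ {v ∈ S | ∃ m : ℤ, v k - α = m}, Cube v := by
  have hcoord : ∀ (s : ℝ) (j : Fin n), j ≠ k →
      (x + s • (Pi.single k 1 : Fin n → ℝ)) j = x j := by
    intro s j hj
    simp [Pi.single_eq_of_ne hj]
  intro s
  obtain ⟨v₀, ⟨hv₀S, m₀, hm₀⟩, s₀, hs₀⟩ := hx
  have hlv₀ : LC k x v₀ := by
    intro j hj
    have := hs₀ j
    rwa [hcoord s₀ j hj] at this
  obtain ⟨u, huS, hpu⟩ := cube_cover hS (x + s • (Pi.single k 1 : Fin n → ℝ))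
  have hlu : LC k x u := by
    intro j hj
    have := hpu j
    rwa [hcoord s j hj] at this
  obtain ⟨w, hwS, hpw⟩ := cube_cover hS (Function.update x k (min (u k) (v₀ k) - 1))
  have hlw : LC k x w := by
    intro j hj
    have := hpw j
    rwa [Function.update_of_ne hj] at this
  have hwk : w k ≤ min (u k) (v₀ k) - 1 := by
    have := (hpw k).1
    rwa [Function.update_self] at this
  have key : ∀ v, v ∈ S → LC k x v → w k ≤ v k → ∃ m : ℕ, v k = w k + m := by
    intro v hvS hlv hle
    set m := Int.toNat ⌊v k - w k⌋ with hm
    have h0 : (0 : ℤ) ≤ ⌊v k - w k⌋ := Int.floor_nonneg.2 (by linarith)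
    have hmcast : (m : ℝ) = (⌊v k - w k⌋ : ℝ) := by
      rw [hm]; exact_mod_cast congrArg (Int.cast : ℤ → ℝ) (Int.toNat_of_nonneg h0)
    have h1 : (m : ℝ) ≤ v k - w k := by rw [hmcast]; exact Int.floor_le _
    have h2 : v k - w k < (m : ℝ) + 1 := by rw [hmcast]; exact Int.lt_floor_add_one _
    obtain ⟨w', hw'S, hlw', hw'k⟩ := chain hS k x hwS hlw m
    have : v = w' := meet_unique hS k x hvS hw'S hlv hlw'
      (by rw [hw'k]; linarith) (by rw [hw'k]; linarith)
    exact ⟨m, by rw [this, hw'k]⟩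
  obtain ⟨mu, hmu⟩ := key u huS hlu
    (by linarith [min_le_left (u k) (v₀ k), hwk])
  obtain ⟨mv, hmv⟩ := key v₀ hv₀S hlv₀
    (by linarith [min_le_right (u k) (v₀ k), hwk])
  refine Set.mem_iUnion₂.2 ⟨u, ⟨huS, ⟨(mu : ℤ) - mv + m₀, ?_⟩⟩, hpu⟩
  push_cast
  linarith [hm₀]
end

section
/- Fix a natural code ε : ℝⁿ → ℕⁿ. If T ⊆ ℝⁿ determines a cube tiling of ℝⁿ, then ε restricted to T is injective; consequently ε maps T bijectively onto ℕⁿ. -/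
/-! Induction on the dimension, for tilings given as indexed families `τ : ι → ℝⁿ`
(so that slices and fibres are subtypes). Fix a code value `v`. The cubes meeting the
hyperplane `xₙ = r` project to a tiling of `ℝⁿ⁻¹`, so by induction exactly one of them
carries the first `n - 1` digits of `v`. Hence the last coordinates of the cubes carrying
these digits tile `ℝ` by unit intervals, so they form a single coset `c + ℤ`, on which
`εₙ` is a bijection onto `ℕ`. -/

open Set Function

theorem existsUnique_subtype_iff {α : Type*} {p q : α → Prop} :
    (∃! a : Subtype p, q a) ↔ ∃! a, p a ∧ q a := by
  simp only [ExistsUnique, Subtype.exists, Subtype.forall, Subtype.mk.injEq]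
  aesop

theorem Fin.eq_iff_init_eq_and_last_eq {n : ℕ} {α : Type*} {f g : Fin (n + 1) → α} :
    f = g ↔ Fin.init f = Fin.init g ∧ f (Fin.last n) = g (Fin.last n) :=
  ⟨fun h => h ▸ ⟨rfl, rfl⟩, fun ⟨hi, hl⟩ => by
    rw [← Fin.snoc_init_self f, ← Fin.snoc_init_self g, hi, hl]⟩

theorem snoc_mem_cube_iff {n : ℕ} (t : Fin (n + 1) → ℝ) (y : Fin n → ℝ) (r : ℝ) :
    Fin.snoc y r ∈ Cube t ↔
      y ∈ Cube (Fin.init t) ∧ r ∈ Ico (t (Fin.last n)) (t (Fin.last n) + 1) := by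
  simp [Cube, Fin.forall_fin_succ', Fin.init]

theorem IsCubeTiling.existsUnique_mem_cube {n : ℕ} {T : Set (Fin n → ℝ)} (hT : IsCubeTiling T)
    (x : Fin n → ℝ) : ∃! t : T, x ∈ Cube (t : Fin n → ℝ) := by
  obtain ⟨t, ht, hxt⟩ := mem_iUnion₂.1 (hT.2.symm ▸ mem_univ x)
  refine ⟨⟨t, ht⟩, hxt, fun s hxs => Subtype.ext ?_⟩
  by_contra hst
  exact disjoint_left.1 (hT.1 s s.2 t ht hst) hxs hxt

section UnitIntervalTiling

variable {ι : Type*} {σ : ι → ℝ} (hσ : ∀ x : ℝ, ∃! i, x ∈ Ico (σ i) (σ i + 1))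
include hσ

theorem exists_tile_eq_add_one (i : ι) : ∃ j, σ j = σ i + 1 := by
  obtain ⟨j, ⟨hj₁, hj₂⟩, -⟩ := hσ (σ i + 1)
  refine ⟨j, le_antisymm hj₁ (not_lt.1 fun hlt => ?_)⟩
  have hji : j = i := (hσ (σ j)).unique ⟨le_rfl, by linarith⟩ ⟨by linarith, hlt⟩
  rw [hji] at hj₂
  linarith

theorem exists_tile_eq_sub_one (i : ι) : ∃ j, σ j = σ i - 1 := by
  obtain ⟨j, ⟨hj₁, hj₂⟩, -⟩ := hσ (σ i - 1)
  obtain ⟨k, hk⟩ := exists_tile_eq_add_one hσ j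
  have hki : k = i := (hσ (σ i)).unique ⟨by linarith, by linarith⟩ ⟨le_rfl, by linarith⟩
  exact ⟨j, by rw [hki] at hk; linarith⟩

theorem exists_tile_eq_add_int (i : ι) (m : ℤ) : ∃ j, σ j = σ i + m := by
  induction m using Int.induction_on with
  | zero => exact ⟨i, by simp⟩
  | succ m ih =>
    obtain ⟨j, hj⟩ := ih
    obtain ⟨k, hk⟩ := exists_tile_eq_add_one hσ j
    exact ⟨k, by push_cast at hj ⊢; linarith⟩
  | pred m ih =>
    obtain ⟨j, hj⟩ := ih
    obtain ⟨k, hk⟩ := exists_tile_eq_sub_one hσ j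
    exact ⟨k, by push_cast at hj ⊢; linarith⟩

theorem exists_int_tile_eq_add (i j : ι) : ∃ m : ℤ, σ j = σ i + m := by
  obtain ⟨k, hk⟩ := exists_tile_eq_add_int hσ i ⌊σ j - σ i⌋
  have h₁ := Int.floor_le (σ j - σ i)
  have h₂ := Int.lt_floor_add_one (σ j - σ i)
  have hjk : j = k := (hσ (σ j)).unique ⟨le_rfl, by linarith⟩ ⟨by linarith, by linarith⟩
  exact ⟨⌊σ j - σ i⌋, hjk ▸ hk⟩

theorem existsUnique_code_eq_of_unitIntervalTiling {ε₀ : ℝ → ℕ+}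
    (hε₀ : ∀ x, BijOn ε₀ {y | ∃ m : ℤ, y = x + m} univ) (k : ℕ+) :
    ∃! i, ε₀ (σ i) = k := by
  obtain ⟨i₀, -, -⟩ := hσ 0
  have hcoset : ∀ i, σ i ∈ {y | ∃ m : ℤ, y = σ i₀ + m} :=
    exists_int_tile_eq_add hσ i₀
  obtain ⟨y, ⟨m, rfl⟩, hy⟩ := (hε₀ (σ i₀)).surjOn (mem_univ k)
  obtain ⟨i, hi⟩ := exists_tile_eq_add_int hσ i₀ m
  refine ⟨i, (congrArg ε₀ hi).trans hy, fun j hj => ?_⟩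
  have hji : σ j = σ i := (hε₀ (σ i₀)).injOn (hcoset j) (hcoset i) (by rw [hj, hi, hy])
  exact (hσ (σ j)).unique ⟨le_rfl, by linarith⟩ ⟨hji ▸ le_rfl, by linarith⟩

end UnitIntervalTiling

theorem existsUnique_code_eq_of_cubeTiling {n : ℕ} {ι : Type*} {τ : ι → Fin n → ℝ}
    (hτ : ∀ x, ∃! i, x ∈ Cube (τ i)) {ε : Fin n → ℝ → ℕ+} (hε : IsNaturalCode ε)
    (v : Fin n → ℕ+) : ∃! i, (fun j => ε j (τ i j)) = v := by
  induction n generalizing ι with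
  | zero =>
    obtain ⟨i, -, hi⟩ := hτ 0
    exact ⟨i, Subsingleton.elim _ _, fun j _ => hi j fun k => k.elim0⟩
  | succ n ih =>
    have hunique_over (r : ℝ) :
        ∃! i, (fun j => Fin.init ε j (Fin.init (τ i) j)) = Fin.init v ∧
          r ∈ Ico (τ i (Fin.last n)) (τ i (Fin.last n) + 1) := by
      have hslice_tiling :
          ∀ y, ∃! i : {i // r ∈ Ico (τ i (Fin.last n)) (τ i (Fin.last n) + 1)},
            y ∈ Cube (Fin.init (τ i)) := fun y =>
        existsUnique_subtype_iff.2 <| by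
          simpa only [snoc_mem_cube_iff, and_comm] using hτ (Fin.snoc y r)
      have hε' : IsNaturalCode (Fin.init ε) := fun j => hε j.castSucc
      simpa only [and_comm] using existsUnique_subtype_iff.1 (ih hslice_tiling hε' (Fin.init v))
    have hlast := existsUnique_code_eq_of_unitIntervalTiling
      (σ := fun i : {i // (fun j => Fin.init ε j (Fin.init (τ i) j)) = Fin.init v} =>
        τ i (Fin.last n))
      (fun r => existsUnique_subtype_iff.2 (hunique_over r)) (hε (Fin.last n)) (v (Fin.last n))
    simpa only [Fin.eq_iff_init_eq_and_last_eq (g := v)] using existsUnique_subtype_iff.1 hlast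

/-- A natural code is injective on any set determining a cube tiling of `ℝⁿ`;
consequently it maps such a set bijectively onto `ℕⁿ`. -/
theorem code_bijective_on_tiling {n : ℕ} (ε : Fin n → ℝ → ℕ+) (hε : IsNaturalCode ε)
    (T : Set (Fin n → ℝ)) (hT : IsCubeTiling T) :
    Set.InjOn (fun t : Fin n → ℝ => fun j => ε j (t j)) T ∧
    Set.BijOn (fun t : Fin n → ℝ => fun j => ε j (t j)) T Set.univ := by
  have hcode : Bijective (T.domRestrict fun t j => ε j (t j)) :=
    (bijective_iff_existsUnique _).2
      (existsUnique_code_eq_of_cubeTiling hT.existsUnique_mem_cube hε)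
  have hbij : BijOn (fun t j => ε j (t j)) T univ :=
    ⟨mapsTo_univ _ _, injOn_iff_injective.2 hcode.1, surjOn_iff_surjective.2 hcode.2⟩
  exact ⟨hbij.injOn, hbij⟩
end
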